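/- Let p_lb ≤ p̄ and p_des be real numbers. If p_lb ≤ p_des ≤ p̄, then p = p_des satisfies (p - p_des)(p - p̄) ≤ 0, (p - p_des)(p_lb - p) ≥ 0, and p_lb ≤ p ≤ p̄; moreover any p in [p_lb, p̄] satisfying both product constraints equals p_des. -/
import Mathlib

theorem agc_interior_dispatch (plb pbar pdes : ℝ)
    (hlim : plb ≤ pbar) (hl : plb ≤ pdes) (hu : pdes ≤ pbar) :
    ((pdes - pdes) * (pdes - pbar) ≤ 0 ∧ (pdes - pdes) * (plb - pdes) ≥ 0 ∧
      plb ≤ pdes ∧ pdes ≤ pbar) ∧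
    (∀ p : ℝ, plb ≤ p → p ≤ pbar →
      (p - pdes) * (p - pbar) ≤ 0 → (p - pdes) * (plb - p) ≥ 0 → p = pdes) := by
  refine ⟨⟨by ring_nf; simp, by ring_nf; simp, hl, hu⟩, fun p h1 h2 h3 h4 => ?_⟩
  nlinarith [sq_nonneg (p - pdes), mul_nonneg (sub_nonneg.2 h1) (sub_nonneg.2 h2)]
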